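/- arXiv:2305.17955 — 2 statements merged into one kernel-verified Lean document; each statement's English description precedes it below -/
import Mathlib

section
/- Let f : (0,∞) → [0,∞) be a decreasing, right-continuous function with lim_{s→+∞} f(s) = 0. Assume there exist constants a > 0 and B > 0 such that t·f(s+t) ≤ B·(f(s))^{1+a} for all s > 0 and all t with 0 ≤ t ≤ 1. Then there exists S ∈ (0,∞) such that f(s) = 0 for all s ≥ S. -/
/-- De Giorgi-type iteration lemma (Eyssidieux–Guedj–Zeriahi):
if `f : (0,∞) → [0,∞)` is decreasing, right-continuous, tends to `0` at `+∞`,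
and satisfies `t * f (s + t) ≤ B * (f s) ^ (1 + a)` for all `s > 0`, `0 ≤ t ≤ 1`,
then `f` vanishes beyond some `S > 0`. -/
theorem stmt_0 (f : ℝ → ℝ)
    (hf_nonneg : ∀ s : ℝ, 0 < s → 0 ≤ f s)
    (hf_dec : ∀ s s' : ℝ, 0 < s → s ≤ s' → f s' ≤ f s)
    (hf_rc : ∀ s : ℝ, 0 < s → ContinuousWithinAt f (Set.Ioi s) s)
    (hf_lim : Filter.Tendsto f Filter.atTop (nhds 0))
    (a B : ℝ) (ha : 0 < a) (hB : 0 < B)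
    (hiter : ∀ s t : ℝ, 0 < s → 0 ≤ t → t ≤ 1 →
      t * f (s + t) ≤ B * (f s) ^ (1 + a)) :
    ∃ S : ℝ, 0 < S ∧ ∀ s : ℝ, S ≤ s → f s = 0 := by
  have hBpos : (0:ℝ) < (2*B)⁻¹ := by positivity
  set ε : ℝ := min 1 ((2*B)⁻¹ ^ (a⁻¹)) with hεdef
  have hεpos : 0 < ε := lt_min one_pos (Real.rpow_pos_of_pos hBpos _)
  obtain ⟨s₀, hs₀1, hfs₀⟩ : ∃ s₀ : ℝ, 1 ≤ s₀ ∧ f s₀ ≤ ε := by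
    have h1 : ∀ᶠ s in Filter.atTop, f s < ε := hf_lim.eventually_lt_const hεpos
    obtain ⟨s₀, hs1, hs2⟩ := ((Filter.eventually_ge_atTop (1:ℝ)).and h1).exists
    exact ⟨s₀, hs1, hs2.le⟩
  have hs₀pos : (0:ℝ) < s₀ := by linarith
  have hfs₀0 : 0 ≤ f s₀ := hf_nonneg s₀ hs₀pos
  have hε1 : (f s₀) ^ a ≤ (2*B)⁻¹ := by
    calc (f s₀) ^ a ≤ ε ^ a := Real.rpow_le_rpow hfs₀0 hfs₀ ha.le
      _ ≤ ((2*B)⁻¹ ^ (a⁻¹)) ^ a :=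
          Real.rpow_le_rpow hεpos.le (min_le_right _ _) ha.le
      _ = (2*B)⁻¹ := by
          rw [← Real.rpow_mul hBpos.le, inv_mul_cancel₀ ha.ne', Real.rpow_one]
  have h2B : 2*B*(f s₀)^a ≤ 1 := by
    have := mul_le_mul_of_nonneg_left hε1 (by positivity : (0:ℝ) ≤ 2*B)
    rwa [mul_inv_cancel₀ (by positivity : (2*B) ≠ 0)] at this
  set r : ℝ := (1/2:ℝ) ^ a with hrdef
  have hr0 : 0 < r := Real.rpow_pos_of_pos (by norm_num) _
  have hr1 : r < 1 := Real.rpow_lt_one (by norm_num) (by norm_num) ha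
  have h1r : 0 < 1 - r := by linarith
  set g : ℕ → ℝ := fun n => Nat.rec s₀ (fun _ x => x + 2*B*(f x)^a) n with hgdef
  have hg0 : g 0 = s₀ := rfl
  have hgsucc : ∀ n, g (n+1) = g n + 2*B*(f (g n))^a := fun n => rfl
  have key : ∀ n, 0 < g n ∧ f (g n) ≤ f s₀ * (1/2)^n ∧
      g n ≤ s₀ + (1 - r^n)/(1-r) := by
    intro n
    induction n with
    | zero => refine ⟨hs₀pos, by simp [hg0], by simp [hg0]⟩
    | succ n ih =>
      obtain ⟨hx, hfx, hsx⟩ := ih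
      set x := g n with hxdef
      set t : ℝ := 2*B*(f x)^a with htdef
      have hfx0 : 0 ≤ f x := hf_nonneg x hx
      have ht0 : 0 ≤ t := by
        have := Real.rpow_nonneg hfx0 a
        positivity
      have htr : t ≤ r^n := by
        have h1 : (f x)^a ≤ (f s₀)^a * r^n := by
          calc (f x)^a ≤ (f s₀ * (1/2)^n)^a := Real.rpow_le_rpow hfx0 hfx ha.le
            _ = (f s₀)^a * ((1/2:ℝ)^n)^a := Real.mul_rpow hfs₀0 (by positivity)
            _ = (f s₀)^a * r^n := by
                rw [← Real.rpow_natCast (1/2:ℝ) n, ← Real.rpow_mul (by norm_num),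
                  mul_comm (n:ℝ) a, Real.rpow_mul (by norm_num : (0:ℝ) ≤ 1/2),
                  Real.rpow_natCast]
        have hrn : (0:ℝ) ≤ r^n := by positivity
        calc t = 2*B*(f x)^a := rfl
          _ ≤ 2*B*((f s₀)^a * r^n) :=
              mul_le_mul_of_nonneg_left h1 (by positivity)
          _ = (2*B*(f s₀)^a) * r^n := by ring
          _ ≤ 1 * r^n := mul_le_mul_of_nonneg_right h2B hrn
          _ = r^n := one_mul _
      have ht1 : t ≤ 1 := htr.trans (pow_le_one₀ hr0.le hr1.le)
      have hhalf : f (x + t) ≤ f x / 2 := by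
        by_cases hz : f x = 0
        · have ht : t = 0 := by
            rw [htdef, hz, Real.zero_rpow ha.ne', mul_zero]
          rw [ht, add_zero, hz]
          norm_num
        · have hfxpos : 0 < f x := lt_of_le_of_ne hfx0 (Ne.symm hz)
          have hra : (0:ℝ) < (f x)^a := Real.rpow_pos_of_pos hfxpos a
          have htpos : 0 < t := by positivity
          have hit := hiter x t hx ht0 ht1
          have heq : B * (f x) ^ (1+a) = t/2 * f x := by
            rw [Real.rpow_add hfxpos, Real.rpow_one, htdef]; ring
          rw [heq] at hit
          have : t * f (x + t) ≤ t * (f x / 2) := by linarith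
          exact (mul_le_mul_iff_right₀ htpos).mp this
      refine ⟨by linarith [hgsucc n ▸ (by linarith : 0 < x + t)], ?_, ?_⟩
      · rw [hgsucc n]
        calc f (x + t) ≤ f x / 2 := hhalf
          _ ≤ (f s₀ * (1/2)^n) / 2 := by linarith
          _ = f s₀ * (1/2)^(n+1) := by ring
      · rw [hgsucc n]
        have hsum : (1 - r^n)/(1-r) + r^n = (1 - r^(n+1))/(1-r) := by
          field_simp
          ring
        calc x + t ≤ (s₀ + (1 - r^n)/(1-r)) + r^n := by linarith
          _ = s₀ + (1 - r^(n+1))/(1-r) := by rw [add_assoc, hsum]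
  refine ⟨s₀ + 1/(1-r), by positivity, fun s hs => ?_⟩
  have hspos : 0 < s := lt_of_lt_of_le (by positivity) hs
  have hle : ∀ n : ℕ, f s ≤ f s₀ * (1/2)^n := by
    intro n
    obtain ⟨hg, hfg, hgs⟩ := key n
    have hgns : g n ≤ s := by
      have hrn : (0:ℝ) ≤ r^n := by positivity
      have : (1 - r^n)/(1-r) ≤ 1/(1-r) :=
        (div_le_div_iff_of_pos_right h1r).mpr (by linarith)
      linarith
    exact le_trans (hf_dec (g n) s hg hgns) hfg
  have htend : Filter.Tendsto (fun n : ℕ => f s₀ * (1/2)^n) Filter.atTop (nhds 0) := by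
    have h := tendsto_pow_atTop_nhds_zero_of_lt_one (by norm_num : (0:ℝ) ≤ 1/2)
      (by norm_num : (1/2:ℝ) < 1)
    simpa using h.const_mul (f s₀)
  exact le_antisymm (ge_of_tendsto' htend hle) (hf_nonneg s hspos)
end

section
/- Let f : ℝ → [0,∞) be a decreasing, right-continuous function, and let a > 0, B > 0 be constants such that t·f(s+t) ≤ B·(f(s))^{1+a} for all s ∈ ℝ and all t with 0 ≤ t ≤ 1. If f(0) < (2B)^{-1/a}, then f(s) = 0 for every s ≥ (2B/(1 − 2^{−a}))·(f(0))^{a}. -/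
/-!
Taking the step `t = 2B f(s)^a` in the hypothesis gives `f(s + t) ≤ f(s)/2`, provided `t ≤ 1`.
Starting from `0` and repeating this step yields points `σₙ` with `f(σₙ) ≤ f(0)/2ⁿ`; hence the
`n`-th step has length at most `2B f(0)^a (2^{-a})ⁿ` (and stays `≤ 1` since `2B f(0)^a < 1`), so
every `σₙ` lies below the geometric sum `2B f(0)^a / (1 - 2^{-a})`. Since `f` is decreasing, `f(s)`
is at most every `f(0)/2ⁿ` beyond that point.
-/

open Finset Filter Topology

noncomputable def deGiorgiSeq (f : ℝ → ℝ) (a B : ℝ) : ℕ → ℝ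
  | 0 => 0
  | n + 1 => deGiorgiSeq f a B n + 2 * B * f (deGiorgiSeq f a B n) ^ a

lemma div_two_pow_rpow {x : ℝ} (hx : 0 ≤ x) (a : ℝ) (n : ℕ) :
    (x / 2 ^ n) ^ a = x ^ a * ((2 : ℝ) ^ (-a)) ^ n := by
  rw [Real.div_rpow hx (by positivity), ← Real.rpow_natCast, ← Real.rpow_mul zero_le_two,
    mul_comm, Real.rpow_mul zero_le_two, Real.rpow_natCast, div_eq_mul_inv, ← inv_pow,
    Real.rpow_neg zero_le_two]

lemma mul_rpow_lt_one_of_lt_rpow_neg_one_div {x c a : ℝ} (hx : 0 ≤ x) (hc : 0 < c) (ha : 0 < a)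
    (h : x < c ^ (-(1 / a))) : c * x ^ a < 1 := by
  rw [Real.rpow_neg hc.le, ← Real.inv_rpow hc.le, one_div,
    Real.lt_rpow_inv_iff_of_pos hx (inv_nonneg.2 hc.le) ha] at h
  exact (lt_inv_mul_iff₀ hc).1 (by rwa [mul_one])

section
variable {f : ℝ → ℝ} {a B : ℝ}

lemma apply_add_le_half (ha : a ≠ 0) (hB : 0 < B)
    (hiter : ∀ s t : ℝ, 0 ≤ t → t ≤ 1 → t * f (s + t) ≤ B * f s ^ (1 + a))
    {s : ℝ} (hfs : 0 ≤ f s) (hsmall : 2 * B * f s ^ a ≤ 1) :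
    f (s + 2 * B * f s ^ a) ≤ f s / 2 := by
  rcases hfs.eq_or_lt with hzero | hpos
  · simp [← hzero, Real.zero_rpow ha]
  have ht : 0 < 2 * B * f s ^ a := by positivity
  refine le_of_mul_le_mul_left ?_ ht
  calc 2 * B * f s ^ a * f (s + 2 * B * f s ^ a) ≤ B * f s ^ (1 + a) :=
        hiter s _ ht.le hsmall
    _ = 2 * B * f s ^ a * (f s / 2) := by
        rw [Real.rpow_add hpos, Real.rpow_one]; ring

variable (hf_nonneg : ∀ s : ℝ, 0 ≤ f s) (ha : 0 < a) (hB : 0 < B)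
    (hiter : ∀ s t : ℝ, 0 ≤ t → t ≤ 1 → t * f (s + t) ≤ B * f s ^ (1 + a))
    (hsmall : 2 * B * f 0 ^ a ≤ 1)
include hf_nonneg ha hB hiter hsmall

lemma apply_deGiorgiSeq_le (n : ℕ) : f (deGiorgiSeq f a B n) ≤ f 0 / 2 ^ n := by
  induction n with
  | zero => simp [deGiorgiSeq]
  | succ n ih =>
    have hle : f (deGiorgiSeq f a B n) ≤ f 0 :=
      ih.trans (div_le_self (hf_nonneg 0) (one_le_pow₀ one_le_two))
    have hstep : 2 * B * f (deGiorgiSeq f a B n) ^ a ≤ 1 :=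
      le_trans (by gcongr; exact hf_nonneg _) hsmall
    calc f (deGiorgiSeq f a B (n + 1)) ≤ f (deGiorgiSeq f a B n) / 2 :=
          apply_add_le_half ha.ne' hB hiter (hf_nonneg _) hstep
      _ ≤ f 0 / 2 ^ n / 2 := by gcongr
      _ = f 0 / 2 ^ (n + 1) := by ring

lemma deGiorgiSeq_le_mul_geom_sum (n : ℕ) :
    deGiorgiSeq f a B n ≤ 2 * B * f 0 ^ a * ∑ k ∈ range n, ((2 : ℝ) ^ (-a)) ^ k := by
  induction n with
  | zero => simp [deGiorgiSeq]
  | succ n ih =>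
    have hinc :
        2 * B * f (deGiorgiSeq f a B n) ^ a ≤ 2 * B * f 0 ^ a * ((2 : ℝ) ^ (-a)) ^ n := by
      rw [mul_assoc _ (f 0 ^ a), ← div_two_pow_rpow (hf_nonneg 0)]
      gcongr
      exacts [hf_nonneg _, apply_deGiorgiSeq_le hf_nonneg ha hB hiter hsmall n]
    rw [deGiorgiSeq, sum_range_succ, mul_add]
    exact add_le_add ih hinc

lemma deGiorgiSeq_le (n : ℕ) :
    deGiorgiSeq f a B n ≤ 2 * B / (1 - (2 : ℝ) ^ (-a)) * f 0 ^ a := by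
  have hr : (2 : ℝ) ^ (-a) < 1 := Real.rpow_lt_one_of_one_lt_of_neg one_lt_two (neg_lt_zero.2 ha)
  have hgeom : ∑ k ∈ range n, ((2 : ℝ) ^ (-a)) ^ k ≤ 1 / (1 - (2 : ℝ) ^ (-a)) := by
    simpa [← range_eq_Ico] using geom_sum_Ico_le_of_lt_one (m := 0) (n := n) (by positivity) hr
  calc deGiorgiSeq f a B n ≤ 2 * B * f 0 ^ a * ∑ k ∈ range n, ((2 : ℝ) ^ (-a)) ^ k :=
        deGiorgiSeq_le_mul_geom_sum hf_nonneg ha hB hiter hsmall n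
    _ ≤ 2 * B * f 0 ^ a * (1 / (1 - (2 : ℝ) ^ (-a))) := by
        gcongr
        exact mul_nonneg (by positivity) (Real.rpow_nonneg (hf_nonneg 0) a)
    _ = 2 * B / (1 - (2 : ℝ) ^ (-a)) * f 0 ^ a := by ring

end

theorem stmt_1_general (f : ℝ → ℝ)
    (hf_nonneg : ∀ s : ℝ, 0 ≤ f s)
    (hf_dec : Antitone f)
    (a B : ℝ) (ha : 0 < a) (hB : 0 < B)
    (hiter : ∀ s t : ℝ, 0 ≤ t → t ≤ 1 → t * f (s + t) ≤ B * (f s) ^ (1 + a))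
    (h0 : f 0 < (2 * B) ^ (-(1 / a))) :
    ∀ s : ℝ, (2 * B / (1 - (2 : ℝ) ^ (-a))) * (f 0) ^ a ≤ s → f s = 0 := by
  intro s hs
  have hsmall : 2 * B * f 0 ^ a ≤ 1 :=
    (mul_rpow_lt_one_of_lt_rpow_neg_one_div (hf_nonneg 0) (by positivity) ha h0).le
  have hdecay (n : ℕ) : f s ≤ f 0 / 2 ^ n :=
    (hf_dec ((deGiorgiSeq_le hf_nonneg ha hB hiter hsmall n).trans hs)).trans
      (apply_deGiorgiSeq_le hf_nonneg ha hB hiter hsmall n)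
  have hlim : Tendsto (fun n : ℕ ↦ f 0 / 2 ^ n) atTop (𝓝 0) := by
    simpa [div_eq_mul_inv] using (tendsto_pow_atTop_nhds_zero_of_lt_one
      (by norm_num : (0 : ℝ) ≤ 2⁻¹) (by norm_num)).const_mul (f 0)
  exact le_antisymm (ge_of_tendsto' hlim hdecay) (hf_nonneg s)

/-- Quantitative De Giorgi-type iteration lemma: if `f : ℝ → [0,∞)` is decreasing,
right-continuous, satisfies `t * f (s + t) ≤ B * (f s) ^ (1 + a)` for all `s ∈ ℝ`,
`0 ≤ t ≤ 1`, and `f 0 < (2B)^(-1/a)`, then `f s = 0` for every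
`s ≥ (2B / (1 - 2^(-a))) * (f 0)^a`. -/
theorem stmt_1 (f : ℝ → ℝ)
    (hf_nonneg : ∀ s : ℝ, 0 ≤ f s)
    (hf_dec : Antitone f)
    (hf_rc : ∀ s : ℝ, ContinuousWithinAt f (Set.Ioi s) s)
    (a B : ℝ) (ha : 0 < a) (hB : 0 < B)
    (hiter : ∀ s t : ℝ, 0 ≤ t → t ≤ 1 → t * f (s + t) ≤ B * (f s) ^ (1 + a))
    (h0 : f 0 < (2 * B) ^ (-(1 / a))) :
    ∀ s : ℝ, (2 * B / (1 - (2 : ℝ) ^ (-a))) * (f 0) ^ a ≤ s → f s = 0 :=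
  stmt_1_general f hf_nonneg hf_dec a B ha hB hiter h0
end
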